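/- arXiv:1105.1605 — 3 statements merged into one kernel-verified Lean document; each statement's English description precedes it below -/
import Mathlib

section
/- Let (X, d_X) and (Y, d_Y) be non-Archimedean metric spaces. Then ρ_u is a non-Archimedean metric on the set of all maps f : X → Y; that is, ρ_u(f, g) ≥ 0 with equality iff f = g, ρ_u(f, g) = ρ_u(g, f), and ρ_u(f, g) ≤ max{ρ_u(f, h), ρ_u(h, g)} for all maps f, g, h : X → Y. -/
open scoped ENNReal

/-- The graph of a map `f : X → Y`, as a subset of `X × Y`. -/
def graphOf {X Y : Type*} (f : X → Y) : Set (X × Y) :=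
  Set.range fun x => (x, f x)

/-- `ρ_H(f,g)`: the Hausdorff distance between the graphs of `f` and `g` in the
product `X × Y` equipped with the sup-metric (which is the product metric in Mathlib). -/
noncomputable def rhoH {X Y : Type*} [MetricSpace X] [MetricSpace Y] (f g : X → Y) : ℝ≥0∞ :=
  EMetric.hausdorffEdist (graphOf f) (graphOf g)

/-- `ρ_s(f,g) = sup_x d_Y(f x, g x)`. -/
noncomputable def rhoS {X Y : Type*} [MetricSpace X] [MetricSpace Y] (f g : X → Y) : ℝ≥0∞ :=
  ⨆ x : X, edist (f x) (g x)

-- `ρ_u(f,g)`: zero if `f = g`; otherwise the infimum of those `ε > 0` for which there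
-- exists `δ > 0` with `sup_{x' ∈ B_x(δ)} d_Y(f x, g x') ≤ ε` and
-- `sup_{x' ∈ B_x(δ)} d_Y(g x, f x') ≤ ε` for all `x ∈ X` (`∞` if there is no such `ε`).
open Classical in
noncomputable def rhoU {X Y : Type*} [MetricSpace X] [MetricSpace Y] (f g : X → Y) : ℝ≥0∞ :=
  if f = g then 0 else
    sInf {ε : ℝ≥0∞ | 0 < ε ∧ ∃ δ : ℝ≥0∞, 0 < δ ∧ ∀ x x' : X, edist x x' < δ →
      edist (f x) (g x') ≤ ε ∧ edist (g x) (f x') ≤ ε}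

/-! The strong triangle inequality for `ρ_u` comes from chaining through the middle map at
two points: `d(f x, g x') ≤ max (d(f x, h x'), d(h x', g x'))` and
`d(g x, f x') ≤ max (d(g x, h x), d(h x, f x'))`, so admissible pairs `(ε₁, δ₁)` for `(f, h)` and
`(ε₂, δ₂)` for `(h, g)` give the admissible pair `(max ε₁ ε₂, min δ₁ δ₂)` for `(f, g)`.
Taking `x' = x` shows that every admissible `ε` bounds `d(f x, g x)`, whence definiteness. -/

theorem IsUltrametricDist.edist_triangle_max {Y : Type*} [PseudoMetricSpace Y]
    [IsUltrametricDist Y] (a b c : Y) : edist a c ≤ max (edist a b) (edist b c) := by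
  simp only [edist_dist, ← ENNReal.ofReal_max]
  exact ENNReal.ofReal_le_ofReal (dist_triangle_max a b c)

section UniformlyClose

variable {X Y : Type*} [PseudoEMetricSpace X]

def UniformlyClose [EDist Y] (f g : X → Y) (ε : ℝ≥0∞) : Prop :=
  ∃ δ : ℝ≥0∞, 0 < δ ∧ ∀ x x' : X, edist x x' < δ →
    edist (f x) (g x') ≤ ε ∧ edist (g x) (f x') ≤ ε

theorem UniformlyClose.symm [EDist Y] {f g : X → Y} {ε : ℝ≥0∞} (h : UniformlyClose f g ε) :
    UniformlyClose g f ε := by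
  obtain ⟨δ, hδ, H⟩ := h
  exact ⟨δ, hδ, fun x x' hx => (H x x' hx).symm⟩

theorem uniformlyClose_comm [EDist Y] {f g : X → Y} {ε : ℝ≥0∞} :
    UniformlyClose f g ε ↔ UniformlyClose g f ε :=
  ⟨UniformlyClose.symm, UniformlyClose.symm⟩

theorem UniformlyClose.edist_le [EDist Y] {f g : X → Y} {ε : ℝ≥0∞}
    (h : UniformlyClose f g ε) (x : X) : edist (f x) (g x) ≤ ε := by
  obtain ⟨δ, hδ, H⟩ := h
  exact (H x x (by rwa [edist_self])).1

theorem UniformlyClose.trans_max [PseudoMetricSpace Y] [IsUltrametricDist Y] {f g h : X → Y}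
    {ε₁ ε₂ : ℝ≥0∞} (hfh : UniformlyClose f h ε₁) (hhg : UniformlyClose h g ε₂) :
    UniformlyClose f g (max ε₁ ε₂) := by
  obtain ⟨δ₁, hδ₁, H₁⟩ := hfh
  obtain ⟨δ₂, hδ₂, H₂⟩ := hhg
  have hdiag (x : X) : edist x x < δ₂ := by rwa [edist_self]
  refine ⟨min δ₁ δ₂, lt_min hδ₁ hδ₂, fun x x' hx => ?_⟩
  have hx₁ := H₁ x x' (hx.trans_le (min_le_left _ _))
  constructor
  · calc edist (f x) (g x') ≤ max (edist (f x) (h x')) (edist (h x') (g x')) :=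
          IsUltrametricDist.edist_triangle_max _ _ _
      _ ≤ max ε₁ ε₂ := max_le_max hx₁.1 (H₂ x' x' (hdiag x')).1
  · calc edist (g x) (f x') ≤ max (edist (g x) (h x)) (edist (h x) (f x')) :=
          IsUltrametricDist.edist_triangle_max _ _ _
      _ ≤ max ε₂ ε₁ := max_le_max (H₂ x x (hdiag x)).2 hx₁.2
      _ = max ε₁ ε₂ := max_comm _ _

end UniformlyClose

section rhoU

variable {X Y : Type*} [MetricSpace X] [MetricSpace Y]

theorem rhoU_of_ne {f g : X → Y} (hfg : f ≠ g) :
    rhoU f g = sInf {ε | 0 < ε ∧ UniformlyClose f g ε} := by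
  rw [rhoU, if_neg hfg]
  rfl

theorem rhoU_self (f : X → Y) : rhoU f f = 0 := by
  simp [rhoU]

theorem rhoU_eq_zero_iff {f g : X → Y} : rhoU f g = 0 ↔ f = g := by
  refine ⟨fun h0 => ?_, fun hfg => hfg ▸ rhoU_self f⟩
  by_contra hfg
  obtain ⟨x, hx⟩ := Function.ne_iff.mp hfg
  have hle : edist (f x) (g x) ≤ rhoU f g := by
    rw [rhoU_of_ne hfg]
    exact le_sInf fun ε hε => hε.2.edist_le x
  exact (edist_pos.mpr hx).not_ge (h0 ▸ hle)

theorem rhoU_comm (f g : X → Y) : rhoU f g = rhoU g f := by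
  rcases eq_or_ne f g with rfl | hfg
  · rfl
  · simp only [rhoU_of_ne hfg, rhoU_of_ne hfg.symm, uniformlyClose_comm]

theorem rhoU_le_max [IsUltrametricDist Y] (f g h : X → Y) :
    rhoU f g ≤ max (rhoU f h) (rhoU h g) := by
  rcases eq_or_ne f g with rfl | hfg
  · simp [rhoU_self]
  -- `rhoU f f = 0` even when no `ε` is admissible for `(f, f)`, so these cases are separate.
  rcases eq_or_ne f h with rfl | hfh
  · exact le_max_right _ _
  rcases eq_or_ne h g with rfl | hhg
  · exact le_max_left _ _
  refine le_of_forall_gt fun c hc => ?_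
  rw [rhoU_of_ne hfh, rhoU_of_ne hhg] at hc
  obtain ⟨ε₁, ⟨hε₁, hfh⟩, hε₁c⟩ := sInf_lt_iff.mp ((le_max_left _ _).trans_lt hc)
  obtain ⟨ε₂, ⟨-, hhg⟩, hε₂c⟩ := sInf_lt_iff.mp ((le_max_right _ _).trans_lt hc)
  rw [rhoU_of_ne hfg]
  have hmem : max ε₁ ε₂ ∈ {ε | 0 < ε ∧ UniformlyClose f g ε} :=
    ⟨hε₁.trans_le (le_max_left _ _), hfh.trans_max hhg⟩
  exact (sInf_le hmem).trans_lt (max_lt hε₁c hε₂c)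

end rhoU

theorem stmt_12_general {X Y : Type*} [MetricSpace X] [MetricSpace Y]
    (hnaY : ∀ x y z : Y, dist x z ≤ max (dist x y) (dist y z)) :
    (∀ f g : X → Y, 0 ≤ rhoU f g) ∧
    (∀ f g : X → Y, (rhoU f g = 0 ↔ f = g)) ∧
    (∀ f g : X → Y, rhoU f g = rhoU g f) ∧
    (∀ f g h : X → Y, rhoU f g ≤ max (rhoU f h) (rhoU h g)) := by
  have : IsUltrametricDist Y := ⟨hnaY⟩
  exact ⟨fun _ _ => zero_le, fun _ _ => rhoU_eq_zero_iff, rhoU_comm, rhoU_le_max⟩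

theorem stmt_12 {X Y : Type*} [MetricSpace X] [MetricSpace Y]
    (hnaX : ∀ x y z : X, dist x z ≤ max (dist x y) (dist y z))
    (hnaY : ∀ x y z : Y, dist x z ≤ max (dist x y) (dist y z)) :
    (∀ f g : X → Y, 0 ≤ rhoU f g) ∧
    (∀ f g : X → Y, (rhoU f g = 0 ↔ f = g)) ∧
    (∀ f g : X → Y, rhoU f g = rhoU g f) ∧
    (∀ f g h : X → Y, rhoU f g ≤ max (rhoU f h) (rhoU h g)) :=
  stmt_12_general hnaY
end

section
/- Let (X, d_X) and (Y, d_Y) be non-Archimedean metric spaces. For any maps f, g : X → Y, one has ρ_H(f, g) ≤ ρ_u(f, g). In particular, if both f and g are nonexpanding (i.e., d_Y(f(x₁), f(x₂)) ≤ d_X(x₁, x₂) for all x₁, x₂, and likewise for g), then ρ_H(f, g) = ρ_u(f, g). -/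
/-!
Taking `x' = x` in the definition of `ρ_u` bounds `d(f x, g x)`, which is the distance between
the graph points `(x, f x)` and `(x, g x)`; hence `ρ_H ≤ ρ_s ≤ ρ_u` with no assumption on the spaces.

Conversely, let `ρ_H(f, g) < ε` and `d(x, x') < ε`. The Hausdorff bound gives a graph point
`(u, g u)` with `d(x, u) < ε` and `d(f x, g u) < ε`. If `g` is nonexpanding and `Y` is
ultrametric, then `d(f x, g x') ≤ max (d(f x, g u)) (d(g u, g x)) (d(g x, g x')) ≤ ε`, so
`δ = ε` witnesses `ρ_u(f, g) ≤ ε`.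
-/

open scoped ENNReal

lemma IsUltrametricDist.edist_triangle_max_s13 {α : Type*} [PseudoMetricSpace α]
    [IsUltrametricDist α] (x y z : α) : edist x z ≤ max (edist x y) (edist y z) := by
  simp only [edist_dist, ← ENNReal.ofReal_max]
  exact ENNReal.ofReal_le_ofReal (dist_triangle_max x y z)

section

variable {X Y : Type*} [MetricSpace X] [MetricSpace Y] {f g : X → Y}

lemma rhoH_comm (f g : X → Y) : rhoH f g = rhoH g f :=
  Metric.hausdorffEDist_comm

lemma rhoH_le_rhoS (f g : X → Y) : rhoH f g ≤ rhoS f g := by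
  have hS (x : X) : edist (f x) (g x) ≤ rhoS f g := le_iSup (fun x => edist (f x) (g x)) x
  refine Metric.hausdorffEDist_le_of_mem_edist ?_ ?_
  · rintro _ ⟨x, rfl⟩
    exact ⟨(x, g x), ⟨x, rfl⟩, by simpa [Prod.edist_eq] using hS x⟩
  · rintro _ ⟨x, rfl⟩
    exact ⟨(x, f x), ⟨x, rfl⟩, by simpa [Prod.edist_eq, edist_comm] using hS x⟩

lemma rhoS_le_rhoU (f g : X → Y) : rhoS f g ≤ rhoU f g := by
  unfold rhoU
  split_ifs with hfg
  · simp [rhoS, hfg]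
  · exact le_sInf fun ε ⟨_, δ, hδ, hε⟩ => iSup_le fun x => (hε x x (by simpa using hδ)).1

lemma rhoU_le {ε δ : ℝ≥0∞} (hε : 0 < ε) (hδ : 0 < δ)
    (h : ∀ x x' : X, edist x x' < δ → edist (f x) (g x') ≤ ε ∧ edist (g x) (f x') ≤ ε) :
    rhoU f g ≤ ε := by
  unfold rhoU
  split_ifs
  · exact zero_le
  · exact sInf_le ⟨hε, δ, hδ, h⟩

lemma edist_le_of_rhoH_lt [IsUltrametricDist Y] (hg : LipschitzWith 1 g) {ε : ℝ≥0∞}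
    (hfg : rhoH f g < ε) {x x' : X} (hx : edist x x' < ε) : edist (f x) (g x') ≤ ε := by
  obtain ⟨_, ⟨u, rfl⟩, hu⟩ := Metric.exists_edist_lt_of_hausdorffEDist_lt
    (show (x, f x) ∈ graphOf f from ⟨x, rfl⟩) hfg
  obtain ⟨hxu, hfu⟩ := max_lt_iff.mp ((Prod.edist_eq _ _).symm.trans_lt hu)
  have hg' (a b : X) : edist (g a) (g b) ≤ edist a b := by simpa using hg.edist_le_mul a b
  have hgu : edist (g u) (g x') ≤ ε :=
    (IsUltrametricDist.edist_triangle_max_s13 _ (g x) _).trans <|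
      max_le ((hg' u x).trans ((edist_comm u x).trans_le hxu.le)) ((hg' x x').trans hx.le)
  exact (IsUltrametricDist.edist_triangle_max_s13 _ (g u) _).trans (max_le hfu.le hgu)

lemma rhoU_le_rhoH [IsUltrametricDist Y] (hf : LipschitzWith 1 f) (hg : LipschitzWith 1 g) :
    rhoU f g ≤ rhoH f g :=
  le_of_forall_gt_imp_ge_of_dense fun _ hε => rhoU_le (pos_of_gt hε) (pos_of_gt hε)
    fun _ _ hx => ⟨edist_le_of_rhoH_lt hg hε hx, edist_le_of_rhoH_lt hf (rhoH_comm f g ▸ hε) hx⟩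

end

theorem stmt_13_general {X Y : Type*} [MetricSpace X] [MetricSpace Y]
    (hnaY : ∀ x y z : Y, dist x z ≤ max (dist x y) (dist y z))
    (f g : X → Y) :
    rhoH f g ≤ rhoU f g ∧
    ((∀ x₁ x₂ : X, dist (f x₁) (f x₂) ≤ dist x₁ x₂) →
     (∀ x₁ x₂ : X, dist (g x₁) (g x₂) ≤ dist x₁ x₂) →
     rhoH f g = rhoU f g) := by
  have : IsUltrametricDist Y := ⟨hnaY⟩
  have hle : rhoH f g ≤ rhoU f g := (rhoH_le_rhoS f g).trans (rhoS_le_rhoU f g)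
  exact ⟨hle, fun hf hg => hle.antisymm (rhoU_le_rhoH (.mk_one hf) (.mk_one hg))⟩

theorem stmt_13 {X Y : Type*} [MetricSpace X] [MetricSpace Y]
    (hnaX : ∀ x y z : X, dist x z ≤ max (dist x y) (dist y z))
    (hnaY : ∀ x y z : Y, dist x z ≤ max (dist x y) (dist y z))
    (f g : X → Y) :
    rhoH f g ≤ rhoU f g ∧
    ((∀ x₁ x₂ : X, dist (f x₁) (f x₂) ≤ dist x₁ x₂) →
     (∀ x₁ x₂ : X, dist (g x₁) (g x₂) ≤ dist x₁ x₂) →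
     rhoH f g = rhoU f g) :=
  stmt_13_general hnaY f g
end

section
/- Let (X, d_X) and (Y, d_Y) be non-Archimedean metric spaces such that every ball in X contains at least two distinct points. For any λ > 0 and P₁, P₂ ∈ D♭(X, Y): β^{*λ}_{X,Y}(P₁, P₂) ≤ ρ_s(P₁, P₂) ≤ β^λ_{X,Y}(P₁, P₂), and ρ_H(P₁, P₂) ≤ max{1, λ} · β^{*λ}_{X,Y}(P₁, P₂). In particular, if P₁, P₂ ∈ D♭^{(1)}(X, Y), then ρ_H(P₁, P₂) = ρ_s(P₁, P₂) = β_{X,Y}(P₁, P₂) = β^*_{X,Y}(P₁, P₂), where β_{X,Y} = β^1_{X,Y} and β^*_{X,Y} = β^{*1}_{X,Y}. -/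
open scoped ENNReal

/-- A ball in a metric space: an open or closed ball of positive radius. -/
def IsBall {X : Type*} [MetricSpace X] (B : Set X) : Prop :=
  ∃ (a : X) (r : ℝ), 0 < r ∧ (B = Metric.ball a r ∨ B = Metric.closedBall a r)

/-- The type `M♭(X)` of all balls of `X`. -/
abbrev BallSet (X : Type*) [MetricSpace X] := {B : Set X // IsBall B}

-- `β^λ_{X,Y}(P₁,P₂)`: zero if `P₁ = P₂`; otherwise the infimum of those `ε > 0` such that
-- `d_Y(P₁(B), P₂(B^{λε})) ≤ ε` and `d_Y(P₂(B), P₁(B^{λε})) ≤ ε` for every ball `B`, where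
-- `B^{δ}` denotes the `δ`-neighborhood (thickening) of `B`, which is again a ball.
open Classical in
noncomputable def betaL {X Y : Type*} [MetricSpace X] [MetricSpace Y]
    (lam : ℝ) (P₁ P₂ : BallSet X → Y) : ℝ≥0∞ :=
  if P₁ = P₂ then 0 else
    sInf {e : ℝ≥0∞ | ∃ ε : ℝ, 0 < ε ∧ e = ENNReal.ofReal ε ∧
      ∀ B : BallSet X, ∃ B' : BallSet X,
        (B' : Set X) = Metric.thickening (lam * ε) (B : Set X) ∧
        edist (P₁ B) (P₂ B') ≤ ENNReal.ofReal ε ∧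
        edist (P₂ B) (P₁ B') ≤ ENNReal.ofReal ε}

/-- `β^{*λ}_{X,Y}(P₁,P₂)`: the infimum of those `ε > 0` such that for every ball `B` there
exist positive `ε_B, ε'_B ≤ ε` with `d_Y(P₁(B), P₂(B^{λε_B})) ≤ ε` and
`d_Y(P₂(B), P₁(B^{λε'_B})) ≤ ε`. -/
noncomputable def betaStarL {X Y : Type*} [MetricSpace X] [MetricSpace Y]
    (lam : ℝ) (P₁ P₂ : BallSet X → Y) : ℝ≥0∞ :=
  sInf {e : ℝ≥0∞ | ∃ ε : ℝ, 0 < ε ∧ e = ENNReal.ofReal ε ∧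
    ∀ B : BallSet X, ∃ εB εB' : ℝ, 0 < εB ∧ εB ≤ ε ∧ 0 < εB' ∧ εB' ≤ ε ∧
      ∃ B' B'' : BallSet X,
        (B' : Set X) = Metric.thickening (lam * εB) (B : Set X) ∧
        (B'' : Set X) = Metric.thickening (lam * εB') (B : Set X) ∧
        edist (P₁ B) (P₂ B') ≤ ENNReal.ofReal ε ∧
        edist (P₂ B) (P₁ B'') ≤ ENNReal.ofReal ε}

/-- `ρ_s(P₁,P₂) = sup_{B ∈ M♭(X)} d_Y(P₁(B), P₂(B))`. -/
noncomputable def rhoSB {X Y : Type*} [MetricSpace X] [MetricSpace Y]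
    (P₁ P₂ : BallSet X → Y) : ℝ≥0∞ :=
  ⨆ B : BallSet X, edist (P₁ B) (P₂ B)

/-- `ρ_H(P₁,P₂)`: the Hausdorff distance between the graphs of `P₁` and `P₂` inside
`W = M♭(X) × Y` with the sup-metric `max (d_{X,H}, d_Y)`, written out via the
`sup-inf` formula for the Hausdorff distance. -/
noncomputable def rhoHB {X Y : Type*} [MetricSpace X] [MetricSpace Y]
    (P₁ P₂ : BallSet X → Y) : ℝ≥0∞ :=
  max
    (⨆ B : BallSet X, ⨅ B' : BallSet X,
      max (EMetric.hausdorffEdist (B : Set X) (B' : Set X)) (edist (P₁ B) (P₂ B')))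
    (⨆ B : BallSet X, ⨅ B' : BallSet X,
      max (EMetric.hausdorffEdist (B : Set X) (B' : Set X)) (edist (P₂ B) (P₁ B')))

/-- Membership in `D♭^{(1)}(X,Y)`: `d_Y(P(B), P(B^ε)) ≤ ε` for all `ε > 0` and all balls `B`. -/
def memDflatOne {X Y : Type*} [MetricSpace X] [MetricSpace Y] (P : BallSet X → Y) : Prop :=
  ∀ ε : ℝ, 0 < ε → ∀ B B' : BallSet X,
    (B' : Set X) = Metric.thickening ε (B : Set X) → edist (P B) (P B') ≤ ENNReal.ofReal ε

/-!
In an ultrametric space thickenings absorb each other: `(s^δ')^δ = s^δ` for `δ' ≤ δ`, a ball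
is its own `δ`-thickening once `δ` is at most its radius, and two sets at Hausdorff distance
`< δ` have the same `δ`-thickening. With these, every comparison between `β^λ`, `β^{*λ}`, `ρ_s`
and `ρ_H` reduces to one or two applications of the strong triangle inequality in `Y`. For
instance a map in `D♭^{(1)}(X, Y)` sends balls `B, B'` at Hausdorff distance `< δ` to points at
distance `≤ δ`, since both are within `δ` of the image of the common thickening `B^δ = B'^δ`.
-/

open Metric Set

lemma ENNReal.le_of_forall_ofReal_gt {a b : ℝ≥0∞}
    (h : ∀ ε : ℝ, 0 < ε → b < ENNReal.ofReal ε → a ≤ ENNReal.ofReal ε) : a ≤ b := by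
  refine le_of_forall_gt_imp_ge_of_dense fun c hc => ?_
  obtain ⟨ε, -, hbε, hεc⟩ := ENNReal.lt_iff_exists_real_btwn.1 hc
  exact (h ε (ENNReal.ofReal_pos.1 (hbε.trans_le' bot_le)) hbε).trans hεc.le

lemma Metric.hausdorffEDist_thickening_le {X : Type*} [PseudoMetricSpace X] {δ : ℝ}
    (hδ : 0 < δ) (s : Set X) : hausdorffEDist s (thickening δ s) ≤ ENNReal.ofReal δ :=
  hausdorffEDist_le_of_infEDist
    (fun _ hx => (infEDist_zero_of_mem (self_subset_thickening hδ s hx)).trans_le bot_le)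
    (fun _ hx => (mem_thickening_iff_infEDist_lt.1 hx).le)

namespace IsUltrametricDist

variable {X : Type*} [PseudoMetricSpace X] [IsUltrametricDist X]

lemma edist_triangle_max_s16 (x y z : X) : edist x z ≤ max (edist x y) (edist y z) := by
  simpa only [edist_dist, ← ENNReal.ofReal_max] using
    ENNReal.ofReal_le_ofReal (dist_triangle_max x y z)

lemma thickening_thickening_of_le {δ' δ : ℝ} (hδ' : 0 < δ') (h : δ' ≤ δ) (s : Set X) :
    thickening δ (thickening δ' s) = thickening δ s := by
  refine (Subset.antisymm ?_ (thickening_subset_of_subset δ (self_subset_thickening hδ' s)))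
  intro x hx
  obtain ⟨y, hy, hxy⟩ := mem_thickening_iff.1 hx
  obtain ⟨z, hz, hyz⟩ := mem_thickening_iff.1 hy
  exact mem_thickening_iff.2
    ⟨z, hz, (dist_triangle_max x y z).trans_lt (max_lt hxy (hyz.trans_le h))⟩

lemma thickening_eq_of_hausdorffEDist_lt {δ : ℝ} {s t : Set X}
    (h : hausdorffEDist s t < ENNReal.ofReal δ) : thickening δ s = thickening δ t := by
  have hδ : 0 < δ := ENNReal.ofReal_pos.1 (h.trans_le' bot_le)
  have absorb : ∀ {u v : Set X}, hausdorffEDist u v < ENNReal.ofReal δ →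
      thickening δ v ⊆ thickening δ u := fun {u v} huv => by
    have hvu : v ⊆ thickening δ u := fun x hx => mem_thickening_iff_infEDist_lt.2 <|
      (infEDist_le_hausdorffEDist_of_mem hx).trans_lt (by rwa [hausdorffEDist_comm])
    exact (thickening_subset_of_subset δ hvu).trans
      (thickening_thickening_of_le hδ le_rfl u).subset
  exact Subset.antisymm (absorb (by rwa [hausdorffEDist_comm])) (absorb h)

lemma thickening_ball {a : X} {r δ : ℝ} (hr : 0 < r) (hδ : 0 < δ) :
    thickening δ (ball a r) = ball a (max r δ) := by
  ext x
  rw [mem_thickening_iff, mem_ball]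
  constructor
  · rintro ⟨y, hy, hxy⟩
    exact (dist_triangle_max x y a).trans_lt
      (max_lt (hxy.trans_le (le_max_right _ _)) ((mem_ball.1 hy).trans_le (le_max_left _ _)))
  · intro hx
    by_cases hxa : dist x a < r
    · exact ⟨x, mem_ball.2 hxa, by simpa using hδ⟩
    · exact ⟨a, mem_ball_self hr, (lt_max_iff.1 hx).resolve_left hxa⟩

lemma thickening_closedBall_of_le {a : X} {r δ : ℝ} (hδ : 0 < δ) (h : δ ≤ r) :
    thickening δ (closedBall a r) = closedBall a r := by
  refine Subset.antisymm (fun x hx => ?_) (self_subset_thickening hδ _)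
  obtain ⟨y, hy, hxy⟩ := mem_thickening_iff.1 hx
  exact mem_closedBall.2 <|
    (dist_triangle_max x y a).trans (max_le (hxy.le.trans h) (mem_closedBall.1 hy))

lemma thickening_closedBall_of_lt {a : X} {r δ : ℝ} (hr : 0 ≤ r) (h : r < δ) :
    thickening δ (closedBall a r) = ball a δ := by
  ext x
  rw [mem_thickening_iff, mem_ball]
  constructor
  · rintro ⟨y, hy, hxy⟩
    exact (dist_triangle_max x y a).trans_lt (max_lt hxy ((mem_closedBall.1 hy).trans_lt h))
  · exact fun hx => ⟨a, mem_closedBall_self hr, hx⟩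

end IsUltrametricDist

section Balls

variable {X : Type*} [MetricSpace X]

open IsUltrametricDist

lemma IsBall.thickening [IsUltrametricDist X] {B : Set X} (hB : IsBall B) {δ : ℝ}
    (hδ : 0 < δ) : IsBall (Metric.thickening δ B) := by
  obtain ⟨a, r, hr, rfl | rfl⟩ := hB
  · exact ⟨a, max r δ, lt_max_of_lt_left hr, Or.inl (IsUltrametricDist.thickening_ball hr hδ)⟩
  · rcases le_or_gt δ r with h | h
    · exact ⟨a, r, hr, Or.inr (thickening_closedBall_of_le hδ h)⟩
    · exact ⟨a, δ, hδ, Or.inl (thickening_closedBall_of_lt hr.le h)⟩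

lemma IsBall.exists_thickening_eq_self [IsUltrametricDist X] {B : Set X} (hB : IsBall B) :
    ∃ r > 0, ∀ δ, 0 < δ → δ ≤ r → Metric.thickening δ B = B := by
  obtain ⟨a, r, hr, rfl | rfl⟩ := hB
  · exact ⟨r, hr, fun δ hδ h => by rw [IsUltrametricDist.thickening_ball hr hδ, max_eq_left h]⟩
  · exact ⟨r, hr, fun δ hδ h => thickening_closedBall_of_le hδ h⟩

end Balls

section Comparison

variable {X Y : Type*} [MetricSpace X] [MetricSpace Y]

open IsUltrametricDist

def BetaAdmissible (lam : ℝ) (P₁ P₂ : BallSet X → Y) (ε : ℝ) : Prop :=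
  ∀ B : BallSet X, ∃ B' : BallSet X,
    (B' : Set X) = thickening (lam * ε) (B : Set X) ∧
    edist (P₁ B) (P₂ B') ≤ ENNReal.ofReal ε ∧ edist (P₂ B) (P₁ B') ≤ ENNReal.ofReal ε

def BetaStarAdmissible (lam : ℝ) (P₁ P₂ : BallSet X → Y) (ε : ℝ) : Prop :=
  ∀ B : BallSet X, ∃ εB εB' : ℝ, 0 < εB ∧ εB ≤ ε ∧ 0 < εB' ∧ εB' ≤ ε ∧
    ∃ B' B'' : BallSet X,
      (B' : Set X) = thickening (lam * εB) (B : Set X) ∧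
      (B'' : Set X) = thickening (lam * εB') (B : Set X) ∧
      edist (P₁ B) (P₂ B') ≤ ENNReal.ofReal ε ∧
      edist (P₂ B) (P₁ B'') ≤ ENNReal.ofReal ε

variable {lam ε : ℝ} {P₁ P₂ : BallSet X → Y}

lemma betaL_le_ofReal (hε : 0 < ε) (h : BetaAdmissible lam P₁ P₂ ε) :
    betaL lam P₁ P₂ ≤ ENNReal.ofReal ε := by
  unfold betaL
  split_ifs
  · exact bot_le
  · exact sInf_le ⟨ε, hε, rfl, h⟩

lemma le_betaL {a : ℝ≥0∞} (h₀ : P₁ = P₂ → a = 0)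
    (h : ∀ ε, 0 < ε → BetaAdmissible lam P₁ P₂ ε → a ≤ ENNReal.ofReal ε) :
    a ≤ betaL lam P₁ P₂ := by
  unfold betaL
  split_ifs with hP
  · exact (h₀ hP).le
  · exact le_sInf <| by rintro _ ⟨ε, hε, rfl, hε'⟩; exact h ε hε hε'

lemma betaStarL_le_ofReal (hε : 0 < ε) (h : BetaStarAdmissible lam P₁ P₂ ε) :
    betaStarL lam P₁ P₂ ≤ ENNReal.ofReal ε :=
  sInf_le ⟨ε, hε, rfl, h⟩

lemma le_betaStarL {a : ℝ≥0∞}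
    (h : ∀ ε, 0 < ε → BetaStarAdmissible lam P₁ P₂ ε → a ≤ ENNReal.ofReal ε) :
    a ≤ betaStarL lam P₁ P₂ :=
  le_sInf <| by rintro _ ⟨ε, hε, rfl, hε'⟩; exact h ε hε hε'

variable (P₁ P₂)

lemma betaStarL_le_rhoSB [IsUltrametricDist X] (hlam : 0 < lam) :
    betaStarL lam P₁ P₂ ≤ rhoSB P₁ P₂ := by
  refine ENNReal.le_of_forall_ofReal_gt fun ε hε hlt => betaStarL_le_ofReal hε fun B => ?_
  obtain ⟨r, hr, hfix⟩ := B.2.exists_thickening_eq_self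
  set η := min ε (r / lam)
  have hη : 0 < η := lt_min hε (div_pos hr hlam)
  have hB : (B : Set X) = thickening (lam * η) B := by
    refine (hfix _ (mul_pos hlam hη) ?_).symm
    calc lam * η ≤ lam * (r / lam) := by gcongr; exact min_le_right _ _
      _ = r := mul_div_cancel₀ r hlam.ne'
  have hd : edist (P₁ B) (P₂ B) ≤ ENNReal.ofReal ε :=
    (le_iSup (fun B => edist (P₁ B) (P₂ B)) B).trans hlt.le
  exact ⟨η, η, hη, min_le_left _ _, hη, min_le_left _ _, B, B, hB, hB, hd,
    edist_comm (P₁ B) _ ▸ hd⟩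

lemma rhoSB_le_betaL [IsUltrametricDist X] [IsUltrametricDist Y] (hlam : 0 < lam) :
    rhoSB P₁ P₂ ≤ betaL lam P₁ P₂ := by
  refine le_betaL (by rintro rfl; simp [rhoSB]) fun ε hε hadm => iSup_le fun B => ?_
  obtain ⟨B', hB', h₁, h₂⟩ := hadm B
  obtain ⟨B'', hB'', -, h₂'⟩ := hadm B'
  -- `B'` is its own `λε`-thickening, so `P₂ B'` and `P₂ B` are both within `ε` of `P₁ B'`.
  obtain rfl : B' = B'' := Subtype.ext <| by
    rw [hB'', hB', thickening_thickening_of_le (mul_pos hlam hε) le_rfl]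
  have h₂₂ : edist (P₂ B') (P₂ B) ≤ ENNReal.ofReal ε :=
    (edist_triangle_max_s16 _ (P₁ B') _).trans (max_le h₂' (by rwa [edist_comm]))
  exact (edist_triangle_max_s16 _ (P₂ B') _).trans (max_le h₁ h₂₂)

lemma iSup_iInf_hausdorffEDist_le (hlam : 0 < lam) {P Q : BallSet X → Y}
    (h : ∀ B : BallSet X, ∃ εB, 0 < εB ∧ εB ≤ ε ∧ ∃ B' : BallSet X,
      (B' : Set X) = thickening (lam * εB) (B : Set X) ∧ edist (P B) (Q B') ≤ ENNReal.ofReal ε) :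
    ⨆ B : BallSet X, ⨅ B' : BallSet X,
      max (hausdorffEDist (B : Set X) (B' : Set X)) (edist (P B) (Q B')) ≤
        ENNReal.ofReal (max 1 lam * ε) := by
  refine iSup_le fun B => ?_
  obtain ⟨εB, hεB, hεBε, B', hB', hd⟩ := h B
  refine iInf_le_of_le B' (max_le ?_ (hd.trans (ENNReal.ofReal_le_ofReal ?_)))
  · rw [hB']
    refine (hausdorffEDist_thickening_le (mul_pos hlam hεB) _).trans
      (ENNReal.ofReal_le_ofReal ?_)
    exact mul_le_mul (le_max_right _ _) hεBε hεB.le (zero_le_one.trans (le_max_left _ _))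
  · exact le_mul_of_one_le_left (hεB.le.trans hεBε) (le_max_left _ _)

lemma rhoHB_le_mul_betaStarL (hlam : 0 < lam) :
    rhoHB P₁ P₂ ≤ ENNReal.ofReal (max 1 lam) * betaStarL lam P₁ P₂ := by
  have hc₀ : ENNReal.ofReal (max 1 lam) ≠ 0 :=
    (ENNReal.ofReal_pos.2 (zero_lt_one.trans_le (le_max_left _ _))).ne'
  rw [mul_comm, ← ENNReal.div_le_iff hc₀ ENNReal.ofReal_ne_top]
  refine le_betaStarL fun ε hε h => ?_
  rw [ENNReal.div_le_iff hc₀ ENNReal.ofReal_ne_top, ← ENNReal.ofReal_mul hε.le, mul_comm ε]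
  refine max_le (iSup_iInf_hausdorffEDist_le hlam fun B => ?_)
    (iSup_iInf_hausdorffEDist_le hlam fun B => ?_)
  · obtain ⟨εB, -, hεB, hεBε, -, -, B', -, hB', -, hd, -⟩ := h B
    exact ⟨εB, hεB, hεBε, B', hB', hd⟩
  · obtain ⟨-, εB', -, -, hεB', hεB'ε, -, B'', -, hB'', -, hd⟩ := h B
    exact ⟨εB', hεB', hεB'ε, B'', hB'', hd⟩

variable {P₁ P₂}

lemma memDflatOne.edist_le_hausdorffEDist [IsUltrametricDist X] [IsUltrametricDist Y]
    {P : BallSet X → Y} (hP : memDflatOne P) (B B' : BallSet X) :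
    edist (P B) (P B') ≤ hausdorffEDist (B : Set X) (B' : Set X) := by
  refine ENNReal.le_of_forall_ofReal_gt fun δ hδ hlt => ?_
  let C : BallSet X := ⟨thickening δ B, B.2.thickening hδ⟩
  have hB : edist (P B) (P C) ≤ ENNReal.ofReal δ := hP δ hδ B C rfl
  have hB' : edist (P B') (P C) ≤ ENNReal.ofReal δ :=
    hP δ hδ B' C (thickening_eq_of_hausdorffEDist_lt hlt)
  exact (edist_triangle_max_s16 _ (P C) _).trans (max_le hB (by rwa [edist_comm]))

lemma memDflatOne.edist_le_of_thickening [IsUltrametricDist X] [IsUltrametricDist Y]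
    {P Q : BallSet X → Y} (hQ : memDflatOne Q) {δ : ℝ} (hδ : 0 < δ) (hδε : δ ≤ ε)
    {B B' : BallSet X} (hB' : (B' : Set X) = thickening δ (B : Set X))
    (h : edist (P B) (Q B') ≤ ENNReal.ofReal ε) :
    edist (P B) (Q ⟨thickening ε B, B.2.thickening (hδ.trans_le hδε)⟩) ≤ ENNReal.ofReal ε :=
  (edist_triangle_max_s16 _ (Q B') _).trans <| max_le h <|
    hQ ε (hδ.trans_le hδε) B' _ (by rw [hB', thickening_thickening_of_le hδ hδε])

lemma betaL_one_le_betaStarL_one [IsUltrametricDist X] [IsUltrametricDist Y]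
    (h₁ : memDflatOne P₁) (h₂ : memDflatOne P₂) : betaL 1 P₁ P₂ ≤ betaStarL 1 P₁ P₂ := by
  refine le_betaStarL fun ε hε h => betaL_le_ofReal hε fun B => ?_
  obtain ⟨εB, εB', hεB, hεBε, hεB', hεB'ε, B', B'', hB', hB'', hd₁, hd₂⟩ := h B
  rw [one_mul] at hB' hB''
  exact ⟨⟨thickening ε B, B.2.thickening hε⟩, by rw [one_mul],
    h₂.edist_le_of_thickening hεB hεBε hB' hd₁, h₁.edist_le_of_thickening hεB' hεB'ε hB'' hd₂⟩

lemma rhoSB_le_rhoHB [IsUltrametricDist X] [IsUltrametricDist Y] (h₂ : memDflatOne P₂) :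
    rhoSB P₁ P₂ ≤ rhoHB P₁ P₂ := by
  refine le_max_of_le_left (iSup_le fun B => le_iSup_of_le B (le_iInf fun B' => ?_))
  calc edist (P₁ B) (P₂ B)
      ≤ max (edist (P₁ B) (P₂ B')) (edist (P₂ B') (P₂ B)) := edist_triangle_max_s16 _ _ _
    _ ≤ max (edist (P₁ B) (P₂ B')) (hausdorffEDist (B' : Set X) (B : Set X)) :=
        max_le_max le_rfl (h₂.edist_le_hausdorffEDist B' B)
    _ = max (hausdorffEDist (B : Set X) (B' : Set X)) (edist (P₁ B) (P₂ B')) := by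
        rw [max_comm, hausdorffEDist_comm]

end Comparison

theorem stmt_16_general {X Y : Type*} [MetricSpace X] [MetricSpace Y]
    (hnaX : ∀ x y z : X, dist x z ≤ max (dist x y) (dist y z))
    (hnaY : ∀ x y z : Y, dist x z ≤ max (dist x y) (dist y z))
    (lam : ℝ) (hlam : 0 < lam) (P₁ P₂ : BallSet X → Y) :
    betaStarL lam P₁ P₂ ≤ rhoSB P₁ P₂ ∧
    rhoSB P₁ P₂ ≤ betaL lam P₁ P₂ ∧
    rhoHB P₁ P₂ ≤ ENNReal.ofReal (max 1 lam) * betaStarL lam P₁ P₂ ∧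
    (memDflatOne P₁ → memDflatOne P₂ →
      (rhoHB P₁ P₂ = rhoSB P₁ P₂ ∧
       rhoSB P₁ P₂ = betaL 1 P₁ P₂ ∧
       betaL 1 P₁ P₂ = betaStarL 1 P₁ P₂)) := by
  have : IsUltrametricDist X := ⟨hnaX⟩
  have : IsUltrametricDist Y := ⟨hnaY⟩
  refine ⟨betaStarL_le_rhoSB P₁ P₂ hlam, rhoSB_le_betaL P₁ P₂ hlam,
    rhoHB_le_mul_betaStarL P₁ P₂ hlam, fun h₁ h₂ => ?_⟩
  have hSB : betaStarL 1 P₁ P₂ ≤ rhoSB P₁ P₂ := betaStarL_le_rhoSB P₁ P₂ one_pos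
  have hBS : rhoSB P₁ P₂ ≤ betaL 1 P₁ P₂ := rhoSB_le_betaL P₁ P₂ one_pos
  have hBB : betaL 1 P₁ P₂ ≤ betaStarL 1 P₁ P₂ := betaL_one_le_betaStarL_one h₁ h₂
  have hHS : rhoHB P₁ P₂ ≤ betaStarL 1 P₁ P₂ := by
    simpa using rhoHB_le_mul_betaStarL P₁ P₂ one_pos
  exact ⟨le_antisymm (hHS.trans hSB) (rhoSB_le_rhoHB h₂), le_antisymm hBS (hBB.trans hSB),
    le_antisymm hBB (hSB.trans hBS)⟩

theorem stmt_16 {X Y : Type*} [MetricSpace X] [MetricSpace Y]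
    (hnaX : ∀ x y z : X, dist x z ≤ max (dist x y) (dist y z))
    (hnaY : ∀ x y z : Y, dist x z ≤ max (dist x y) (dist y z))
    (hball : ∀ B : Set X, IsBall B → ∃ x ∈ B, ∃ y ∈ B, x ≠ y)
    (lam : ℝ) (hlam : 0 < lam) (P₁ P₂ : BallSet X → Y) :
    betaStarL lam P₁ P₂ ≤ rhoSB P₁ P₂ ∧
    rhoSB P₁ P₂ ≤ betaL lam P₁ P₂ ∧
    rhoHB P₁ P₂ ≤ ENNReal.ofReal (max 1 lam) * betaStarL lam P₁ P₂ ∧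
    (memDflatOne P₁ → memDflatOne P₂ →
      (rhoHB P₁ P₂ = rhoSB P₁ P₂ ∧
       rhoSB P₁ P₂ = betaL 1 P₁ P₂ ∧
       betaL 1 P₁ P₂ = betaStarL 1 P₁ P₂)) :=
  stmt_16_general hnaX hnaY lam hlam P₁ P₂
end
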